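/- arXiv:2503.02664 — 4 statements merged into one kernel-verified Lean document; each statement's English description precedes it below -/
import Mathlib

section
/- Let u be a real irrational number and c1, c2, c3 integers with gcd(c1,c2,c3)=1 satisfying c1 + c2*u + c3*u^2 = 0. If integers d1, d2, d3 also satisfy d1 + d2*u + d3*u^2 = 0, then there exists an integer z such that d1 = z*c1, d2 = z*c2, and d3 = z*c3. -/
/-!
Subtracting suitable multiples of the two relations eliminates first `u ^ 2` and then the
constant term (after cancelling `u ≠ 0`), leaving integer relations `a + b u = 0`, which are
trivial since `u` is irrational. Hence `(d1, d2, d3)` is parallel to `(c1, c2, c3)`, and since the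
latter is primitive, a Bézout combination `x c1 + y c2 + w c3 = 1` gives the factor
`z = x d1 + y d2 + w d3`.
-/

theorem Irrational.intCast_eq_zero_of_add_mul_eq_zero {u : ℝ} (hu : Irrational u) {a b : ℤ}
    (h : (a : ℝ) + b * u = 0) : a = 0 ∧ b = 0 := by
  obtain rfl : b = 0 := by
    by_contra hb
    exact ((hu.intCast_mul hb).intCast_add a).ne_zero h
  exact ⟨by simpa using h, rfl⟩

theorem Int.exists_mul_add_mul_add_mul_eq_one {c1 c2 c3 : ℤ}
    (h : Int.gcd c1 (Int.gcd c2 c3) = 1) : ∃ x y w : ℤ, c1 * x + c2 * y + c3 * w = 1 := by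
  obtain ⟨a, b, hab⟩ := Int.isCoprime_iff_gcd_eq_one.mpr (by simpa using h)
  refine ⟨a, b * Int.gcdA c2 c3, b * Int.gcdB c2 c3, ?_⟩
  rw [← hab, Int.gcd_eq_gcd_ab c2 c3]
  ring

theorem Int.exists_eq_mul_of_cross_eq_zero {c1 c2 c3 d1 d2 d3 : ℤ}
    (hgcd : Int.gcd c1 (Int.gcd c2 c3) = 1)
    (h12 : c1 * d2 = c2 * d1) (h13 : c1 * d3 = c3 * d1) (h23 : c2 * d3 = c3 * d2) :
    ∃ z : ℤ, d1 = z * c1 ∧ d2 = z * c2 ∧ d3 = z * c3 := by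
  obtain ⟨x, y, w, hxyw⟩ := Int.exists_mul_add_mul_add_mul_eq_one hgcd
  refine ⟨x * d1 + y * d2 + w * d3, ?_, ?_, ?_⟩
  · linear_combination (-d1) * hxyw - y * h12 - w * h13
  · linear_combination (-d2) * hxyw + x * h12 - w * h23
  · linear_combination (-d3) * hxyw + x * h13 + y * h23

theorem uniqueness_of_quadratic_equation
    (u : ℝ) (hu : Irrational u)
    (c1 c2 c3 : ℤ) (hgcd : Int.gcd c1 (Int.gcd c2 c3) = 1)
    (hc : (c1 : ℝ) + c2 * u + c3 * u ^ 2 = 0)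
    (d1 d2 d3 : ℤ) (hd : (d1 : ℝ) + d2 * u + d3 * u ^ 2 = 0) :
    ∃ z : ℤ, d1 = z * c1 ∧ d2 = z * c2 ∧ d3 = z * c3 := by
  have no_square : ((c3 * d1 - c1 * d3 : ℤ) : ℝ) + (c3 * d2 - c2 * d3 : ℤ) * u = 0 := by
    push_cast
    linear_combination (c3 : ℝ) * hd - (d3 : ℝ) * hc
  have no_constant : ((c1 * d2 - c2 * d1 : ℤ) : ℝ) + (c1 * d3 - c3 * d1 : ℤ) * u = 0 := by
    refine (mul_eq_zero.mp ?_).resolve_left hu.ne_zero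
    push_cast
    linear_combination (c1 : ℝ) * hd - (d1 : ℝ) * hc
  obtain ⟨h13, h23⟩ := hu.intCast_eq_zero_of_add_mul_eq_zero no_square
  obtain ⟨h12, -⟩ := hu.intCast_eq_zero_of_add_mul_eq_zero no_constant
  exact Int.exists_eq_mul_of_cross_eq_zero hgcd (by linarith) (by linarith) (by linarith)
end

section
/- If u is a real number with a periodic continued fraction expansion (i.e., u = [a_0, a_1, a_2, ...] with a_n = a_{n+p} for all n ≥ 0, some period p ≥ 1, and all a_i positive integers), then u is a quadratic irrational, i.e., u is irrational and there exist integers c1, c2, c3 not all zero with c1 + c2*u + c3*u^2 = 0. -/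
/-!
The complete quotients `ξ n` determine the continued fraction expansion of `ξ 0`: their floors are
the partial quotients and their fractional parts are `1 / ξ (n + 1)`. Hence the expansion of `ξ 0`
never terminates, so `ξ 0` is irrational, and since a real number is the limit of its convergents,
periodicity of the partial quotients forces `ξ p = ξ 0`. Unfolding `p` steps of the recurrence
writes `ξ 0` as a Möbius transform `(A ξ p + B) / (C ξ p + D)` of `ξ p` with `C ≥ 1`; substituting
`ξ p = ξ 0` gives a nontrivial quadratic equation.
-/

open GenContFract

structure IsCompleteQuotients (a : ℕ → ℕ) (ξ : ℕ → ℝ) : Prop where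
  eq_add_one_div : ∀ n, ξ n = a n + 1 / ξ (n + 1)
  one_lt_succ : ∀ n, 1 < ξ (n + 1)

namespace IsCompleteQuotients

variable {a : ℕ → ℕ} {ξ η : ℕ → ℝ}

theorem shift (h : IsCompleteQuotients a ξ) (k : ℕ) :
    IsCompleteQuotients (fun n => a (n + k)) (fun n => ξ (n + k)) where
  eq_add_one_div n := by simpa only [Nat.add_right_comm n 1 k] using h.eq_add_one_div (n + k)
  one_lt_succ n := by simpa only [Nat.add_right_comm n 1 k] using h.one_lt_succ (n + k)

theorem sub_eq_inv (h : IsCompleteQuotients a ξ) (n : ℕ) : ξ n - a n = (ξ (n + 1))⁻¹ := by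
  rw [h.eq_add_one_div n, one_div, add_sub_cancel_left]

theorem floor_eq (h : IsCompleteQuotients a ξ) (n : ℕ) : ⌊ξ n⌋ = a n := by
  have hpos : 0 < (ξ (n + 1))⁻¹ := inv_pos.2 (one_pos.trans (h.one_lt_succ n))
  have hlt : (ξ (n + 1))⁻¹ < 1 := inv_lt_one_of_one_lt₀ (h.one_lt_succ n)
  have hsub := h.sub_eq_inv n
  rw [Int.floor_eq_iff]
  push_cast
  constructor <;> linarith

theorem fract_eq (h : IsCompleteQuotients a ξ) (n : ℕ) : Int.fract (ξ n) = (ξ (n + 1))⁻¹ := by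
  rw [← Int.self_sub_floor, h.floor_eq n, Int.cast_natCast, h.sub_eq_inv n]

theorem stream_eq (h : IsCompleteQuotients a ξ) (n : ℕ) :
    IntFractPair.stream (ξ 0) n = some (IntFractPair.of (ξ n)) := by
  induction n with
  | zero => rfl
  | succ n ih =>
    have hfr : (IntFractPair.of (ξ n)).fr = (ξ (n + 1))⁻¹ := h.fract_eq n
    have hne : (ξ (n + 1))⁻¹ ≠ 0 := inv_ne_zero (one_pos.trans (h.one_lt_succ n)).ne'
    rw [IntFractPair.stream_succ_of_some ih (hfr ▸ hne), hfr, inv_inv]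

theorem of_h (h : IsCompleteQuotients a ξ) : (GenContFract.of (ξ 0)).h = a 0 := by
  rw [of_h_eq_floor, h.floor_eq 0, Int.cast_natCast]

theorem of_s_get? (h : IsCompleteQuotients a ξ) (n : ℕ) :
    (GenContFract.of (ξ 0)).s.get? n = some ⟨1, a (n + 1)⟩ := by
  rw [get?_of_eq_some_of_succ_get?_intFractPair_stream (h.stream_eq (n + 1))]
  change some (⟨1, ((⌊ξ (n + 1)⌋ : ℤ) : ℝ)⟩ : GenContFract.Pair ℝ) = _
  rw [h.floor_eq, Int.cast_natCast]

theorem irrational (h : IsCompleteQuotients a ξ) : Irrational (ξ 0) := by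
  rintro ⟨q, hq⟩
  obtain ⟨n, hn⟩ := (terminates_iff_rat (ξ 0)).2 ⟨q, hq.symm⟩
  exact Option.some_ne_none _ ((h.of_s_get? n).symm.trans hn)

theorem eq_of_isCompleteQuotients (hξ : IsCompleteQuotients a ξ) (hη : IsCompleteQuotients a η) :
    ξ 0 = η 0 := by
  have hof : GenContFract.of (ξ 0) = GenContFract.of (η 0) := by
    ext1
    · rw [hξ.of_h, hη.of_h]
    · exact Stream'.Seq.ext fun n => by rw [hξ.of_s_get?, hη.of_s_get?]
  refine tendsto_nhds_unique (GenContFract.of_convergence (ξ 0)) ?_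
  rw [hof]
  exact GenContFract.of_convergence (η 0)

theorem exists_mobius (h : IsCompleteQuotients a ξ) (ha : ∀ n, 1 ≤ a (n + 1)) (n : ℕ) :
    ∃ A B C D : ℕ, 1 ≤ C ∧ ξ 0 * (C * ξ (n + 1) + D) = A * ξ (n + 1) + B := by
  have hne : ∀ n, ξ (n + 1) ≠ 0 := fun n => (one_pos.trans (h.one_lt_succ n)).ne'
  induction n with
  | zero =>
    refine ⟨a 0, 1, 1, 0, le_rfl, ?_⟩
    rw [h.eq_add_one_div 0]
    field_simp [hne 0]
    push_cast
    ring
  | succ n ih =>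
    obtain ⟨A, B, C, D, hC, hrel⟩ := ih
    refine ⟨A * a (n + 1) + B, A, C * a (n + 1) + D, C, ?_, ?_⟩
    · nlinarith [ha n]
    · rw [h.eq_add_one_div (n + 1)] at hrel
      field_simp [hne (n + 1)] at hrel ⊢
      push_cast
      linear_combination hrel

end IsCompleteQuotients

/-- A periodic continued fraction value is a quadratic irrational. -/
theorem periodic_cf_is_quadratic_irrational
    (a : ℕ → ℕ) (ha : ∀ n, 1 ≤ a n)
    (p : ℕ) (hp : 1 ≤ p) (hper : ∀ n, a (n + p) = a n)
    (u : ℝ) (ξ : ℕ → ℝ)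
    (hξ0 : ξ 0 = u)
    (hξrec : ∀ n, ξ n = a n + 1 / ξ (n + 1))
    (hξgt : ∀ n, 1 ≤ n → 1 < ξ n) :
    Irrational u ∧ ∃ c1 c2 c3 : ℤ,
      ¬(c1 = 0 ∧ c2 = 0 ∧ c3 = 0) ∧ (c1 : ℝ) + c2 * u + c3 * u ^ 2 = 0 := by
  have hξ : IsCompleteQuotients a ξ := ⟨hξrec, fun n => hξgt (n + 1) (Nat.le_add_left 1 n)⟩
  have hshift : IsCompleteQuotients a (fun n => ξ (n + p)) := by
    simpa only [hper] using hξ.shift p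
  have hperiodic : ξ p = u := by
    rw [← hξ0, hξ.eq_of_isCompleteQuotients hshift, zero_add]
  obtain ⟨k, rfl⟩ : ∃ k, p = k + 1 := Nat.exists_eq_add_of_le' hp
  obtain ⟨A, B, C, D, hC, hmobius⟩ := hξ.exists_mobius (fun n => ha (n + 1)) k
  rw [hξ0, hperiodic] at hmobius
  refine ⟨hξ0 ▸ hξ.irrational, -B, D - A, C, by omega, ?_⟩
  push_cast
  linear_combination hmobius
end

section
/- Let u = [a_0, a_1, ...] be an infinite continued fraction that is periodic with period p starting from index h (a_ν = a_{ν+p} for all ν ≥ h), with convergent numerators A_k and denominators B_k defined by the standard recursion. Writing g = h + p, u satisfies the quadratic equation c3*u^2 + c2*u + c1 = 0 where c3 = B_{h-2}*B_{g-1} - B_{h-1}*B_{g-2}, c2 = B_{h-1}*A_{g-2} + A_{h-1}*B_{g-2} - A_{h-2}*B_{g-1} - B_{h-2}*A_{g-1}, and c1 = A_{h-2}*A_{g-1} - A_{h-1}*A_{g-2}. -/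
/-!
If `ξ k` is the `k`-th complete quotient of `u`, then `u` is the image of `ξ k` under the
Möbius map with matrix `[[A_{k-1}, A_{k-2}], [B_{k-1}, B_{k-2}]]`. Periodicity gives the same
`ξ` at the indices `h` and `g = h + p`, and eliminating `ξ` between the two Möbius relations
leaves the quadratic equation for `u`.
-/

section MobiusRelation

variable {K : Type*} [Field K] {a A B ξ : ℕ → K}

theorem value_mul_tail_denom_eq_tail_num
    (hA0 : A 0 = 0) (hA1 : A 1 = 1) (hB0 : B 0 = 1) (hB1 : B 1 = 0)
    (hArec : ∀ k, A (k + 2) = a k * A (k + 1) + A k)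
    (hBrec : ∀ k, B (k + 2) = a k * B (k + 1) + B k)
    (hξrec : ∀ k, ξ k = a k + 1 / ξ (k + 1)) (hξne : ∀ k, ξ (k + 1) ≠ 0) (k : ℕ) :
    (B (k + 1) * ξ k + B k) * ξ 0 = A (k + 1) * ξ k + A k := by
  induction k with
  | zero => simp [hA0, hA1, hB0, hB1]
  | succ n ih =>
    have hξ : ξ n * ξ (n + 1) = a n * ξ (n + 1) + 1 := by
      rw [hξrec n]
      field_simp [hξne n]
    rw [hArec, hBrec]
    linear_combination ξ (n + 1) * ih - (B (n + 1) * ξ 0 - A (n + 1)) * hξ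

end MobiusRelation

theorem quadratic_of_mobius_eq_mobius {R : Type*} [CommRing R] {a₀ a₁ b₀ b₁ c₀ c₁ d₀ d₁ x u : R}
    (hab : (b₁ * x + b₀) * u = a₁ * x + a₀) (hcd : (d₁ * x + d₀) * u = c₁ * x + c₀) :
    (b₀ * d₁ - b₁ * d₀) * u ^ 2 + (b₁ * c₀ + a₁ * d₀ - a₀ * d₁ - b₀ * c₁) * u
      + (a₀ * c₁ - a₁ * c₀) = 0 := by
  linear_combination (d₁ * u - c₁) * hab - (b₁ * u - a₁) * hcd

/-- Indices are shifted by `2`: `A k` here is `A_{k-2}` of the paper. -/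
theorem preperiodic_cf_quadratic_general
    (a : ℕ → ℕ)
    (h p : ℕ)
    (A B : ℕ → ℝ)
    (hA0 : A 0 = 0) (hA1 : A 1 = 1)
    (hB0 : B 0 = 1) (hB1 : B 1 = 0)
    (hArec : ∀ k, A (k + 2) = a k * A (k + 1) + A k)
    (hBrec : ∀ k, B (k + 2) = a k * B (k + 1) + B k)
    (u : ℝ) (ξ : ℕ → ℝ)
    (hξ0 : ξ 0 = u)
    (hξrec : ∀ k, ξ k = a k + 1 / ξ (k + 1))
    (hξgt : ∀ k, 1 ≤ k → 1 < ξ k)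
    (hξper : ξ (h + p) = ξ h) :
    (B h * B (h + p + 1) - B (h + 1) * B (h + p)) * u ^ 2
      + (B (h + 1) * A (h + p) + A (h + 1) * B (h + p)
          - A h * B (h + p + 1) - B h * A (h + p + 1)) * u
      + (A h * A (h + p + 1) - A (h + 1) * A (h + p)) = 0 := by
  have hξne : ∀ k, ξ (k + 1) ≠ 0 := fun k =>
    (zero_lt_one.trans (hξgt (k + 1) (Nat.le_add_left 1 k))).ne'
  have hmob := value_mul_tail_denom_eq_tail_num hA0 hA1 hB0 hB1 hArec hBrec hξrec hξne
  have hh := hmob h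
  have hg := hmob (h + p)
  rw [hξper] at hg
  rw [hξ0] at hh hg
  exact quadratic_of_mobius_eq_mobius hh hg

/-- Quadratic equation for a pre-periodic continued fraction.  Indices are
shifted by `2`: `A k` here denotes `A_{k-2}` of the paper, so e.g.
`A_{h-1} = A (h+1)` and, with `g = h + p`, `B_{g-1} = B (g+1)`. -/
theorem preperiodic_cf_quadratic
    (a : ℕ → ℕ) (ha : ∀ k, 1 ≤ a k)
    (h p : ℕ) (hp : 1 ≤ p)
    (hper : ∀ ν, h ≤ ν → a (ν + p) = a ν)
    (A B : ℕ → ℝ)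
    (hA0 : A 0 = 0) (hA1 : A 1 = 1)
    (hB0 : B 0 = 1) (hB1 : B 1 = 0)
    (hArec : ∀ k, A (k + 2) = a k * A (k + 1) + A k)
    (hBrec : ∀ k, B (k + 2) = a k * B (k + 1) + B k)
    (u : ℝ) (ξ : ℕ → ℝ)
    (hξ0 : ξ 0 = u)
    (hξrec : ∀ k, ξ k = a k + 1 / ξ (k + 1))
    (hξgt : ∀ k, 1 ≤ k → 1 < ξ k)
    (hξper : ξ (h + p) = ξ h) :
    (B h * B (h + p + 1) - B (h + 1) * B (h + p)) * u ^ 2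
      + (B (h + 1) * A (h + p) + A (h + 1) * B (h + p)
          - A h * B (h + p + 1) - B h * A (h + p + 1)) * u
      + (A h * A (h + p + 1) - A (h + 1) * A (h + p)) = 0 :=
  preperiodic_cf_quadratic_general a h p A B hA0 hA1 hB0 hB1 hArec hBrec u ξ hξ0 hξrec hξgt hξper
end

section
/- Let u = [3, 2, 3, 2, ...] (i.e., u = 3 + 1/(2 + 1/u), u > 1). Then u = (3 + √15)/2, and u satisfies 2u^2 - 6u - 3 = 0. Moreover for the base point m = 1 on the period-2 chain (u' = [1, 3, 2, 3, 2, ...]), the resonance triple (k1, k2, k3) = (7, 7, -2) satisfies 7*λ1(u') + 7*λ2(u') - 2*λ3(u') = 0 where λ_i are the Bianchi IX eigenvalues at u'. -/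
/-!
Both `u = [3; 2, 3, 2, …]` and `w = [2; 3, 2, 3, …]` are fixed points of a two-step Möbius map,
hence roots of quadratics: `2u² - 6u - 3 = 0` and `3w² - 6w - 2 = 0`. The condition `u > 1` picks
the root `(3 + √15)/2`. The resonance combination `7λ₁ + 7λ₂ - 2λ₃` at `v` equals
`-6 (2v² + 2v - 7) / (1 + v + v²)`, and substituting `w = 1/(u' - 1)` turns `3w² - 6w - 2` into
a multiple of `2u'² + 2u' - 7`.
-/

lemma quadratic_of_eq_add_one_div_add_one_div {a b x : ℝ} (ha : 0 < a) (hb : 0 < b)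
    (hx : x = a + 1 / (b + 1 / x)) : b * x ^ 2 - a * b * x - a = 0 := by
  have hx0 : x ≠ 0 := by
    rintro rfl
    have : 0 < a + 1 / (b + 1 / 0) := by simp only [div_zero, add_zero]; positivity
    linarith
  have hbx : x * b + 1 ≠ 0 := by
    intro h
    have hden : b + 1 / x = 0 := by field_simp; linear_combination h
    rw [hden, div_zero, add_zero] at hx
    subst hx
    exact hden.not_gt (by positivity)
  field_simp at hx
  linear_combination hx

lemma eq_of_two_sq_sub_six_mul_sub_three {u : ℝ} (hu : 0 < u) (h : 2 * u ^ 2 - 6 * u - 3 = 0) :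
    u = (3 + √15) / 2 := by
  have hsq : (2 * u - 3) ^ 2 = 15 := by linear_combination 2 * h
  have hpos : 0 ≤ 2 * u - 3 := by nlinarith
  rw [← hsq, Real.sqrt_sq hpos]
  ring

lemma quadratic_one_add_one_div {w : ℝ} (hw : 3 * w ^ 2 - 6 * w - 2 = 0) :
    2 * (1 + 1 / w) ^ 2 + 2 * (1 + 1 / w) - 7 = 0 := by
  have hw0 : w ≠ 0 := by rintro rfl; norm_num at hw
  field_simp
  linear_combination -hw

lemma resonance_combination_eq (v : ℝ) :
    7 * (-6 * v / (1 + v + v ^ 2)) + 7 * (6 * (1 + v) / (1 + v + v ^ 2))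
      - 2 * (6 * v * (1 + v) / (1 + v + v ^ 2))
      = -6 * (2 * v ^ 2 + 2 * v - 7) / (1 + v + v ^ 2) := by
  ring

theorem two_periodic_example_3_2_general
    (u : ℝ) (hu : 1 < u) (hcf : u = 3 + 1 / (2 + 1 / u))
    (w : ℝ) (hwcf : w = 2 + 1 / (3 + 1 / w))
    (u' : ℝ) (hu' : u' = 1 + 1 / w) :
    u = (3 + Real.sqrt 15) / 2 ∧
    2 * u ^ 2 - 6 * u - 3 = 0 ∧
    7 * (-6 * u' / (1 + u' + u' ^ 2))
      + 7 * (6 * (1 + u') / (1 + u' + u' ^ 2))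
      - 2 * (6 * u' * (1 + u') / (1 + u' + u' ^ 2)) = 0 := by
  have hu_quad : 2 * u ^ 2 - 6 * u - 3 = 0 := by
    linear_combination quadratic_of_eq_add_one_div_add_one_div (by norm_num) (by norm_num) hcf
  have hw_quad : 3 * w ^ 2 - 6 * w - 2 = 0 := by
    linear_combination quadratic_of_eq_add_one_div_add_one_div (by norm_num) (by norm_num) hwcf
  have hu'_quad : 2 * u' ^ 2 + 2 * u' - 7 = 0 := hu' ▸ quadratic_one_add_one_div hw_quad
  refine ⟨eq_of_two_sq_sub_six_mul_sub_three (by linarith) hu_quad, hu_quad, ?_⟩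
  rw [resonance_combination_eq, hu'_quad, mul_zero, zero_div]

theorem two_periodic_example_3_2
    (u : ℝ) (hu : 1 < u) (hcf : u = 3 + 1 / (2 + 1 / u))
    (w : ℝ) (hw1 : 1 < w) (hwcf : w = 2 + 1 / (3 + 1 / w))
    (u' : ℝ) (hu' : u' = 1 + 1 / w) :
    u = (3 + Real.sqrt 15) / 2 ∧
    2 * u ^ 2 - 6 * u - 3 = 0 ∧
    7 * (-6 * u' / (1 + u' + u' ^ 2))
      + 7 * (6 * (1 + u') / (1 + u' + u' ^ 2))
      - 2 * (6 * u' * (1 + u') / (1 + u' + u' ^ 2)) = 0 :=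
  two_periodic_example_3_2_general u hu hcf w hwcf u' hu'
end
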